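/- The maximum cardinality of a 2-distance set X in H_7 such that R_7 ⊆ X and the two distances of X are √2 and 2 is exactly 29, attained by X = R_7 ∪ Y, where Y = {v_A : A is a 3-element subset of {1,…,8} with 1 ∈ A} and v_A ∈ H_7 is the point whose i-th coordinate equals −1/2 for i ∈ A and 1/2 for i ∉ A. Moreover this X is a maximal 2-distance set in H_7. -/

import Mathlib

noncomputable section

open scoped BigOperators Classical

/-- The set of Euclidean distances between distinct points of `X`. -/
def distSet {m : ℕ} (X : Set (EuclideanSpace ℝ (Fin m))) : Set ℝ :=
  {r | ∃ x ∈ X, ∃ y ∈ X, x ≠ y ∧ dist x y = r}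

/-- `X` is a 2-distance set: exactly two distances occur between distinct points. -/
def IsTwoDistSet {m : ℕ} (X : Set (EuclideanSpace ℝ (Fin m))) : Prop :=
  (distSet X).ncard = 2

/-- The affine hyperplane `H_d = {x ∈ ℝ^{d+1} : ∑ x_i = 1}`. -/
def Hplane (d : ℕ) : Set (EuclideanSpace ℝ (Fin (d+1))) :=
  {x | ∑ i, x i = 1}

/-- The regular simplex `R_d`: the standard basis vectors of `ℝ^{d+1}`. -/
def simplex (d : ℕ) : Set (EuclideanSpace ℝ (Fin (d+1))) :=
  Set.range (fun i => EuclideanSpace.single i (1:ℝ))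

/-- The constant `c = (1 - (d+1-k)β)/(d+1)`. -/
def cval (d k : ℕ) (β : ℝ) : ℝ := (1 - ((d:ℝ) + 1 - (k:ℝ)) * β) / ((d:ℝ) + 1)

/-- The set `T_d(k,β)` of points of `H_d` all of whose coordinates lie in `{c, c+β}`,
with exactly `k` coordinates equal to `c`. -/
def Tset (d k : ℕ) (β : ℝ) : Set (EuclideanSpace ℝ (Fin (d+1))) :=
  {x | x ∈ Hplane d ∧ (∀ i, x i = cval d k β ∨ x i = cval d k β + β) ∧
    {i | x i = cval d k β}.ncard = k}

/-- The point of `H_7` attached to a 3-subset `A` of `{1,…,8}`: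
`-1/2` on `A`, `1/2` elsewhere. -/
def vSeven (A : Finset (Fin (7+1))) : EuclideanSpace ℝ (Fin (7+1)) :=
  WithLp.toLp 2 (fun i => if i ∈ A then (-1/2 : ℝ) else 1/2)


/-!
A point `x` of `H_7` at distance `√2` or `2` from every `e_i` satisfies
`‖x‖² - 2 x_i + 1 ∈ {2, 4}`, so its coordinates take the two values `a` and `a - 1` with
`a = (‖x‖² - 1) / 2`. The linear constraint `∑ x_i = 1` together with the value of `‖x‖²`
forces `a = 1/2` and exactly three coordinates equal to `-1/2`: every non-simplex point is
some `v_A` with `|A| = 3`. As `|v_A - v_B|² = 6 - 2 |A ∩ B|`, the sets `A` occurring form an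
intersecting family, of size at most `C(7, 2) = 21` by Erdős–Ko–Rado, and the star at `0`
attains the bound. The star configuration is maximal: a new point `v_A` with `0 ∉ A` lies at
distance `√6` from `v_B` for any 3-set `B ∋ 0` disjoint from `A`.
-/

open Finset

section General

variable {ι : Type*} [Fintype ι] [DecidableEq ι]

lemma dist_single_one_sq (x : EuclideanSpace ℝ ι) (i : ι) :
    dist x (EuclideanSpace.single i 1) ^ 2 = ‖x‖ ^ 2 - 2 * x i + 1 := by
  rw [dist_eq_norm, norm_sub_sq_real, EuclideanSpace.inner_single_right, PiLp.norm_single]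
  simp

lemma dist_single_one_single_one {i j : ι} (h : i ≠ j) :
    dist (EuclideanSpace.single i (1 : ℝ)) (EuclideanSpace.single j 1) = √2 := by
  rw [← Real.sqrt_sq dist_nonneg, dist_single_one_sq, PiLp.norm_single, PiLp.single_apply,
    if_neg h.symm]
  norm_num

lemma single_one_mem_hplane {d : ℕ} (i : Fin (d + 1)) : EuclideanSpace.single i 1 ∈ Hplane d := by
  simp [Hplane, PiLp.single_apply]

lemma simplex_subset_hplane (d : ℕ) : simplex d ⊆ Hplane d := by
  rintro _ ⟨i, rfl⟩
  exact single_one_mem_hplane i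

lemma ncard_simplex (d : ℕ) : (simplex d).ncard = d + 1 := by
  rw [simplex, Set.ncard_range_of_injective, Nat.card_eq_fintype_card, Fintype.card_fin]
  intro i j h
  simpa using congrArg (fun v => v i) h

end General

lemma Finset.card_inter_lt_of_ne {α : Type*} [DecidableEq α] {A B : Finset α} {n : ℕ}
    (hA : #A = n) (hB : #B = n) (hAB : A ≠ B) : #(A ∩ B) < n := by
  by_contra! h
  have hAsub : A ⊆ B := inter_eq_left.1 <| eq_of_subset_of_card_le inter_subset_left (by omega)
  exact hAB <| eq_of_subset_of_card_le hAsub (by omega)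

section DistSet

variable {m : ℕ} {X Y : Set (EuclideanSpace ℝ (Fin m))}

lemma distSet_mono (h : X ⊆ Y) : distSet X ⊆ distSet Y := by
  rintro r ⟨x, hx, y, hy, hxy, rfl⟩
  exact ⟨x, h hx, y, h hy, hxy, rfl⟩

lemma Set.Finite.distSet (h : X.Finite) : (distSet X).Finite :=
  ((h.prod h).image fun p => dist p.1 p.2).subset <| by
    rintro r ⟨x, hx, y, hy, -, rfl⟩
    exact ⟨(x, y), ⟨hx, hy⟩, rfl⟩

lemma IsTwoDistSet.distSet_eq_of_subset (hX : IsTwoDistSet X) (hY : IsTwoDistSet Y)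
    (hXY : X ⊆ Y) (hfin : Y.Finite) : distSet X = distSet Y :=
  Set.eq_of_subset_of_ncard_le (distSet_mono hXY) (hY.trans hX.symm).le hfin.distSet

end DistSet

lemma mem_sqrt_two_two_iff {r : ℝ} (hr : 0 ≤ r) :
    r ∈ ({√2, 2} : Set ℝ) ↔ r ^ 2 = 2 ∨ r ^ 2 = 4 := by
  have h2 : √2 ^ 2 = 2 := Real.sq_sqrt zero_le_two
  constructor
  · rintro (rfl | rfl)
    exacts [Or.inl h2, Or.inr (by norm_num)]
  · rintro (h | h) <;> rw [← Real.sqrt_sq hr, h]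
    · exact Or.inl rfl
    · exact Or.inr (by rw [show (4 : ℝ) = 2 ^ 2 by norm_num, Real.sqrt_sq zero_le_two]; rfl)

section VSeven

lemma vSeven_apply (A : Finset (Fin (7 + 1))) (i : Fin (7 + 1)) :
    vSeven A i = if i ∈ A then -1/2 else 1/2 := rfl

lemma norm_vSeven_sq (A : Finset (Fin (7 + 1))) : ‖vSeven A‖ ^ 2 = 2 := by
  rw [EuclideanSpace.norm_sq_eq]
  simp only [vSeven_apply, Real.norm_eq_abs, sq_abs, apply_ite (· ^ 2 : ℝ → ℝ)]
  norm_num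

lemma vSeven_mem_hplane {A : Finset (Fin (7 + 1))} (hA : #A = 3) : vSeven A ∈ Hplane 7 := by
  simp [Hplane, vSeven_apply, Finset.sum_ite, filter_notMem_eq_sdiff, card_sdiff, hA]
  norm_num

lemma dist_vSeven_single_one_sq (A : Finset (Fin (7 + 1))) (i : Fin (7 + 1)) :
    dist (vSeven A) (EuclideanSpace.single i 1) ^ 2 = if i ∈ A then 4 else 2 := by
  rw [dist_single_one_sq, norm_vSeven_sq, vSeven_apply]
  split_ifs <;> norm_num

lemma dist_vSeven_vSeven_sq (A B : Finset (Fin (7 + 1))) :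
    dist (vSeven A) (vSeven B) ^ 2 = #A + #B - 2 * #(A ∩ B) := by
  have h : ∀ i, (vSeven A i - vSeven B i) ^ 2 =
      (if i ∈ A then 1 else 0) + (if i ∈ B then 1 else 0) - 2 * (if i ∈ A ∩ B then 1 else 0) := by
    intro i
    simp only [vSeven_apply, mem_inter]
    split_ifs <;> simp_all <;> norm_num
  rw [EuclideanSpace.dist_eq, Real.sq_sqrt (by positivity)]
  simp only [Real.dist_eq, sq_abs, h, sum_sub_distrib, sum_add_distrib, ← mul_sum, sum_boole]
  simp [filter_and]

lemma vSeven_injective : Function.Injective vSeven := by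
  intro A B h
  ext i
  have := congrArg (fun v => v i) h
  simp only [vSeven_apply] at this
  split_ifs at this <;> simp_all <;> norm_num at this

lemma vSeven_ne_single_one (A : Finset (Fin (7 + 1))) (i : Fin (7 + 1)) :
    vSeven A ≠ EuclideanSpace.single i 1 := by
  intro h
  have := congrArg (fun v => v i) h
  simp only [vSeven_apply, PiLp.single_apply] at this
  split_ifs at this <;> norm_num at this

end VSeven

lemma exists_eq_vSeven_of_dist_single_one {x : EuclideanSpace ℝ (Fin (7 + 1))}
    (hx : x ∈ Hplane 7) (h : ∀ i, dist x (EuclideanSpace.single i 1) ^ 2 = 2 ∨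
      dist x (EuclideanSpace.single i 1) ^ 2 = 4) :
    ∃ A : Finset (Fin (7 + 1)), #A = 3 ∧ x = vSeven A := by
  set a := (‖x‖ ^ 2 - 1) / 2 with ha
  set A := univ.filter fun i => x i ≠ a
  have hdichotomy : ∀ i, x i = a ∨ x i = a - 1 := by
    intro i
    rcases h i with h' | h' <;> rw [dist_single_one_sq] at h'
    exacts [Or.inl (by linarith), Or.inr (by linarith)]
  have hcoord : ∀ i, x i = a - if i ∈ A then 1 else 0 := by
    intro i
    by_cases hi : x i = a
    · simp [A, hi]
    · simpa [A, hi] using (hdichotomy i).resolve_left hi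
  have hsum : ∑ i, x i = 8 * a - #A := by
    simp [hcoord, sum_sub_distrib]
  have hnorm : ‖x‖ ^ 2 = 8 * a ^ 2 - (2 * a - 1) * #A := by
    have hsq : ∀ i, x i ^ 2 = a ^ 2 - (2 * a - 1) * (if i ∈ A then 1 else 0) := by
      intro i
      rw [hcoord]
      split_ifs <;> ring
    rw [EuclideanSpace.norm_sq_eq]
    simp [sq_abs, hsq, sum_sub_distrib]
    ring
  have hx' : ∑ i, x i = 1 := hx
  have ha' : a = 1 / 2 := by nlinarith [sq_nonneg (2 * a - 1)]
  have hA : (#A : ℝ) = 3 := by linarith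
  refine ⟨A, by exact_mod_cast hA, ?_⟩
  ext i
  rw [hcoord, vSeven_apply, ha']
  split_ifs <;> norm_num

section UpperBound

variable {X : Set (EuclideanSpace ℝ (Fin (7 + 1)))}

lemma exists_eq_vSeven_of_mem (hH : X ⊆ Hplane 7) (hs : simplex 7 ⊆ X)
    (hd : distSet X ⊆ {√2, 2}) {x : EuclideanSpace ℝ (Fin (7 + 1))} (hx : x ∈ X)
    (hxs : x ∉ simplex 7) : ∃ A : Finset (Fin (7 + 1)), #A = 3 ∧ x = vSeven A :=
  exists_eq_vSeven_of_dist_single_one (hH hx) fun i =>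
    (mem_sqrt_two_two_iff dist_nonneg).1 <|
      hd ⟨x, hx, _, hs ⟨i, rfl⟩, fun h => hxs (h ▸ ⟨i, rfl⟩), rfl⟩

lemma not_disjoint_of_dist_vSeven_mem {A B : Finset (Fin (7 + 1))} (hA : #A = 3) (hB : #B = 3)
    (h : dist (vSeven A) (vSeven B) ∈ ({√2, 2} : Set ℝ)) : ¬Disjoint A B := by
  intro hAB
  rw [mem_sqrt_two_two_iff dist_nonneg, dist_vSeven_vSeven_sq,
    disjoint_iff_inter_eq_empty.1 hAB, hA, hB] at h
  norm_num at h

lemma ncard_le_of_simplex_subset (hH : X ⊆ Hplane 7) (hs : simplex 7 ⊆ X)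
    (hd : distSet X ⊆ {√2, 2}) : X.ncard ≤ 29 := by
  set F := univ.filter fun A : Finset (Fin (7 + 1)) => #A = 3 ∧ vSeven A ∈ X
  have hXF : X ⊆ simplex 7 ∪ vSeven '' F := by
    intro x hx
    by_cases hxs : x ∈ simplex 7
    · exact Or.inl hxs
    obtain ⟨A, hA, rfl⟩ := exists_eq_vSeven_of_mem hH hs hd hx hxs
    exact Or.inr ⟨A, by simp [F, hA, hx], rfl⟩
  have hF : (F : Set (Finset (Fin (7 + 1)))).Intersecting := by
    intro A hA B hB
    simp only [F, coe_filter, mem_univ, true_and, Set.mem_ofPred_eq] at hA hB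
    by_cases hAB : A = B
    · subst hAB
      rw [disjoint_self]
      rintro rfl
      simp at hA
    · exact not_disjoint_of_dist_vSeven_mem hA.1 hB.1 <|
        hd ⟨_, hA.2, _, hB.2, vSeven_injective.ne hAB, rfl⟩
  have hEKR : #F ≤ 21 :=
    erdos_ko_rado hF (fun A hA => (mem_filter.1 hA).2.1) (by norm_num)
  calc X.ncard ≤ (simplex 7 ∪ vSeven '' F).ncard :=
        Set.ncard_le_ncard hXF ((Set.finite_range _).union (F.finite_toSet.image _))
    _ ≤ (simplex 7).ncard + (vSeven '' F).ncard := Set.ncard_union_le _ _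
    _ ≤ 8 + 21 := by
        rw [ncard_simplex, Set.ncard_image_of_injective _ vSeven_injective, Set.ncard_coe_finset]
        omega

end UpperBound

def starFamily : Set (Finset (Fin (7 + 1))) := {A | #A = 3 ∧ 0 ∈ A}

def starConfig : Set (EuclideanSpace ℝ (Fin (7 + 1))) := simplex 7 ∪ vSeven '' starFamily

lemma ncard_starFamily : starFamily.ncard = 21 := by
  rw [starFamily, ← coe_filter_univ, Set.ncard_coe_finset]
  decide

lemma starConfig_subset_hplane : starConfig ⊆ Hplane 7 :=
  Set.union_subset (simplex_subset_hplane 7) <| by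
    rintro _ ⟨A, hA, rfl⟩
    exact vSeven_mem_hplane hA.1

lemma starConfig_finite : starConfig.Finite :=
  (Set.finite_range _).union (Set.toFinite _ |>.image _)

lemma distSet_starConfig_subset : distSet starConfig ⊆ {√2, 2} := by
  rintro _ ⟨x, hx, y, hy, hxy, rfl⟩
  rw [mem_sqrt_two_two_iff dist_nonneg]
  rcases hx with ⟨i, rfl⟩ | ⟨A, ⟨hA, hA0⟩, rfl⟩ <;> rcases hy with ⟨j, rfl⟩ | ⟨B, ⟨hB, hB0⟩, rfl⟩
  · rw [dist_single_one_single_one (by rintro rfl; exact hxy rfl), Real.sq_sqrt zero_le_two]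
    exact Or.inl rfl
  · rw [dist_comm, dist_vSeven_single_one_sq]
    split_ifs <;> simp
  · rw [dist_vSeven_single_one_sq]
    split_ifs <;> simp
  · have hpos : 0 < #(A ∩ B) := card_pos.2 ⟨0, mem_inter.2 ⟨hA0, hB0⟩⟩
    have hlt := card_inter_lt_of_ne hA hB (fun h => hxy (h ▸ rfl))
    rw [dist_vSeven_vSeven_sq, hA, hB]
    interval_cases #(A ∩ B) <;> norm_num

lemma distSet_starConfig : distSet starConfig = {√2, 2} := by
  refine distSet_starConfig_subset.antisymm ?_
  rintro _ (rfl | rfl)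
  · exact ⟨_, Or.inl ⟨0, rfl⟩, _, Or.inl ⟨1, rfl⟩,
      fun h => by simpa using congrArg (fun v => v 0) h, dist_single_one_single_one (by decide)⟩
  · refine ⟨vSeven {0, 1, 2}, Or.inr ⟨_, ⟨by decide, by decide⟩, rfl⟩, _, Or.inl ⟨0, rfl⟩,
      vSeven_ne_single_one _ _, ?_⟩
    rw [← Real.sqrt_sq dist_nonneg, dist_vSeven_single_one_sq, if_pos (by decide),
      show (4 : ℝ) = 2 ^ 2 by norm_num, Real.sqrt_sq zero_le_two]

lemma isTwoDistSet_starConfig : IsTwoDistSet starConfig := by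
  rw [IsTwoDistSet, distSet_starConfig, Set.ncard_pair]
  intro h
  have := Real.sq_sqrt (zero_le_two (α := ℝ))
  rw [h] at this
  norm_num at this

lemma ncard_starConfig : starConfig.ncard = 29 := by
  have hdisj : Disjoint (simplex 7) (vSeven '' starFamily) := by
    rw [Set.disjoint_left]
    rintro _ ⟨i, rfl⟩ ⟨A, -, hA⟩
    exact vSeven_ne_single_one A i hA
  rw [starConfig, Set.ncard_union_eq hdisj (Set.finite_range _) (Set.toFinite _ |>.image _),
    ncard_simplex, Set.ncard_image_of_injective _ vSeven_injective,
    ncard_starFamily]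

lemma not_isTwoDistSet_starConfig_union {z : EuclideanSpace ℝ (Fin (7 + 1))} (hz : z ∈ Hplane 7)
    (hzS : z ∉ starConfig) : ¬IsTwoDistSet (starConfig ∪ {z}) := by
  intro h
  have hD : distSet (starConfig ∪ {z}) = {√2, 2} := by
    rw [← isTwoDistSet_starConfig.distSet_eq_of_subset h Set.subset_union_left
      (starConfig_finite.union (Set.finite_singleton z)), distSet_starConfig]
  obtain ⟨A, hA, rfl⟩ := exists_eq_vSeven_of_mem
    (Set.union_subset starConfig_subset_hplane (Set.singleton_subset_iff.2 hz))
    (Set.subset_union_left.trans Set.subset_union_left) hD.le (Or.inr rfl)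
    (fun h => hzS (Or.inl h))
  have h0 : (0 : Fin (7 + 1)) ∉ A := fun h0 => hzS (Or.inr ⟨A, ⟨hA, h0⟩, rfl⟩)
  obtain ⟨B, h0B, hBA, hB⟩ := exists_subsuperset_card_eq (s := {0}) (t := Aᶜ) (n := 3)
    (singleton_subset_iff.2 (mem_compl.2 h0)) (by simp) (by simp [card_compl, hA])
  have hB0 : (0 : Fin (7 + 1)) ∈ B := singleton_subset_iff.1 h0B
  refine not_disjoint_of_dist_vSeven_mem hA hB ?_
    (disjoint_of_subset_right hBA disjoint_compl_right)
  exact hD.le ⟨_, Or.inr rfl, _, Or.inl (Or.inr ⟨B, ⟨hB, hB0⟩, rfl⟩),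
    fun h => h0 (vSeven_injective h ▸ hB0), rfl⟩

theorem stmt16 :
    IsGreatest {n : ℕ | ∃ X : Set (EuclideanSpace ℝ (Fin (7+1))),
      X.Finite ∧ X ⊆ Hplane 7 ∧ simplex 7 ⊆ X ∧
      distSet X = {Real.sqrt 2, 2} ∧ X.ncard = n} 29 ∧
    (simplex 7 ∪ vSeven '' {A : Finset (Fin (7+1)) | A.card = 3 ∧ (0 : Fin (7+1)) ∈ A})
        ⊆ Hplane 7 ∧
    distSet (simplex 7 ∪ vSeven ''
        {A : Finset (Fin (7+1)) | A.card = 3 ∧ (0 : Fin (7+1)) ∈ A}) = {Real.sqrt 2, 2} ∧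
    (simplex 7 ∪ vSeven ''
        {A : Finset (Fin (7+1)) | A.card = 3 ∧ (0 : Fin (7+1)) ∈ A}).ncard = 29 ∧
    ∀ z ∈ Hplane 7,
      z ∉ (simplex 7 ∪ vSeven '' {A : Finset (Fin (7+1)) | A.card = 3 ∧ (0 : Fin (7+1)) ∈ A}) →
      ¬ IsTwoDistSet ((simplex 7 ∪ vSeven ''
          {A : Finset (Fin (7+1)) | A.card = 3 ∧ (0 : Fin (7+1)) ∈ A}) ∪ {z}) := by
  refine ⟨⟨?_, ?_⟩, starConfig_subset_hplane, distSet_starConfig, ncard_starConfig,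
    fun z hz hzS => not_isTwoDistSet_starConfig_union hz hzS⟩
  · exact ⟨starConfig, starConfig_finite, starConfig_subset_hplane, Set.subset_union_left,
      distSet_starConfig, ncard_starConfig⟩
  · rintro n ⟨X, -, hH, hs, hd, rfl⟩
    exact ncard_le_of_simplex_subset hH hs hd.le
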